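/- Let p be a prime and let g(X) ∈ ℤ_{p²}[X] be monic with irreducible reduction modulo p and coefficients in {0, 1, …, p−1}, and let u₁(X), u₂(X), u₃(X), u₄(X) ∈ ℤ_{p²}[X] have coefficients in {0, 1, …, p−1}, not ≡ 0 (mod p), each of degree strictly less than deg g(X). Set R₁ = ℤ_{p²}[X, Y]/(g(X) − u₃(X)Y, Y² − p·u₁(X), pY) and R₂ = ℤ_{p²}[X, Y]/(g(X) − u₄(X)Y, Y² − p·u₂(X), pY). If there exist polynomials v₁(X), v₂(X) ∈ ℤ_{p²}[X] such that u₂(X) ≡ v₂(X)² · u₁(X) and u₄(X) ≡ v₂(X) · u₃(X) modulo the ideal (p, g(X)²), and u₁(X) ≡ v₁(X)² · u₂(X) and u₃(X) ≡ v₁(X) · u₄(X) modulo the ideal (p, g(X)²), then R₁ is isomorphic to R₂ as a ring. -/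

import Mathlib

set_option synthInstance.maxHeartbeats 400000

open Polynomial

/-- The ideal `(g(X) − u'(X)·Y, Y² − p·u(X), pY)` of `ℤ_{p²}[X,Y]`, the latter modelled
as `Polynomial (Polynomial (ZMod (p^2)))`, the outer indeterminate being `Y` and the
inner one being `X`. -/
noncomputable def paperIdealI (p : ℕ) (g u' u : Polynomial (ZMod (p ^ 2))) :
    Ideal (Polynomial (Polynomial (ZMod (p ^ 2)))) :=
  Ideal.span
    ({Polynomial.C g - Polynomial.C u' * Polynomial.X,
      Polynomial.X ^ 2 -
        (p : Polynomial (Polynomial (ZMod (p ^ 2)))) * Polynomial.C u,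
      (p : Polynomial (Polynomial (ZMod (p ^ 2)))) * Polynomial.X} :
      Set (Polynomial (Polynomial (ZMod (p ^ 2)))))

/-!
In `R = ℤ_{p²}[X,Y]/(g − u'Y, Y² − pu, pY)` we have `p² = pY = 0` and `g = u'Y`, so `p` kills the
image of `(p, g)` and `Y` kills the image of `(p, g²)`. Since `ḡ` is irreducible over the perfect
field `𝔽_p`, `g'` and every `w` with `w̄ ≠ 0`, `deg w < deg g` are units modulo `(p, g)`, hence
modulo `(p, g²)` because `(p, g)² ⊆ (p, g²)`.

If `U ≡ v²u` with `v` a unit, then `X ↦ X + sY`, `Y ↦ vY + pc` defines a map from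
`R' = ℤ_{p²}[X,Y]/(g − U'Y, Y² − pU, pY)` onto `R`: the Taylor expansion
`w(X + sY) = w + w'sY + p(…)` reduces the relations of `R'` to `u' + g's ≡ U'v (mod (p, g²))`,
solved by `s` since `g'` is a unit, and to a congruence modulo `(p, g)` solved by `c` since `U'` is
a unit. The hypotheses give such surjections `R₁ → R₂ → R₁`; their composite is a surjective
endomorphism of a Noetherian ring, hence injective.
-/

theorem RingHom.injective_of_surjective_of_isNoetherianRing {R : Type*} [CommRing R]
    [IsNoetherianRing R] (f : R →+* R) (hf : Function.Surjective f) : Function.Injective f := by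
  rw [RingHom.injective_iff_ker_eq_bot, RingHom.ker_eq_comap_bot]
  by_contra hne
  have hcomap : StrictMono (Ideal.comap f) := (Ideal.orderEmbeddingOfSurjective f hf).strictMono
  refine not_strictMono_of_wellFoundedGT (fun n => (Ideal.comap f)^[n] ⊥)
    (strictMono_nat_of_lt_succ fun n => ?_)
  rw [Function.iterate_succ_apply]
  exact hcomap.iterate n (bot_lt_iff_ne_bot.mpr hne)

theorem Ideal.exists_mul_sub_one_mem_sq {R : Type*} [CommRing R] {I : Ideal R} {w : R}
    (h : ∃ z, w * z - 1 ∈ I) : ∃ z, w * z - 1 ∈ I ^ 2 := by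
  obtain ⟨z, hz⟩ := h
  refine ⟨z * (2 - w * z), ?_⟩
  have key : w * (z * (2 - w * z)) - 1 = -((w * z - 1) * (w * z - 1)) := by ring
  rw [key, pow_two]
  exact neg_mem (Ideal.mul_mem_mul hz hz)

theorem Ideal.span_pair_sq_le {R : Type*} [CommRing R] {a : R} (b : R) (ha : a * a = 0) :
    Ideal.span {a, b} ^ 2 ≤ Ideal.span {a, b ^ 2} := by
  rw [pow_two, Ideal.span_pair_mul_span_pair, Ideal.span_le]
  rintro x (rfl | rfl | rfl | rfl)
  · rw [ha]; exact zero_mem _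
  · exact Ideal.mul_mem_right _ _ (Ideal.subset_span (Set.mem_insert _ _))
  · exact Ideal.mul_mem_left _ _ (Ideal.subset_span (Set.mem_insert _ _))
  · rw [← pow_two]; exact Ideal.subset_span (by simp)

theorem Ideal.span_pair_pow_le {R : Type*} [CommRing R] (a b : R) (n : ℕ) (hn : n ≠ 0) :
    Ideal.span {a, b ^ n} ≤ Ideal.span {a, b} := by
  rw [Ideal.span_le]
  rintro x (rfl | rfl)
  · exact Ideal.subset_span (Set.mem_insert _ _)
  · exact Ideal.pow_mem_of_mem _ (Ideal.subset_span (by simp)) n (Nat.pos_of_ne_zero hn)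

theorem Polynomial.isCoprime_of_irreducible_of_degree_lt {K : Type*} [Field K] {f w : K[X]}
    (hf : Irreducible f) (hw : w ≠ 0) (hdeg : w.degree < f.degree) : IsCoprime f w :=
  hf.coprime_iff_not_dvd.mpr fun hdvd => hw (eq_zero_of_dvd_of_degree_lt hdvd hdeg)

theorem Polynomial.ringHom_mem_of_forall {R S : Type*} [Semiring R] [Semiring S]
    {T : Subsemiring S} (f : R[X] →+* S) (hC : ∀ r, f (C r) ∈ T) (hX : f X ∈ T) (w : R[X]) :
    f w ∈ T := by
  rw [w.as_sum_range_C_mul_X_pow, map_sum]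
  exact T.sum_mem fun i _ => by rw [map_mul, map_pow]; exact T.mul_mem (hC _) (T.pow_mem hX i)

theorem ZMod.ker_castHom {m n : ℕ} [NeZero n] (h : m ∣ n) :
    RingHom.ker (ZMod.castHom h (ZMod m)) = Ideal.span {(m : ZMod n)} := by
  ext a
  rw [RingHom.mem_ker, Ideal.mem_span_singleton]
  constructor
  · intro ha
    rw [← ZMod.natCast_zmod_val a, castHom_apply, ZMod.cast_natCast h,
      ZMod.natCast_eq_zero_iff] at ha
    obtain ⟨k, hk⟩ := ha
    exact ⟨k, by rw [← ZMod.natCast_zmod_val a, hk, Nat.cast_mul]⟩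
  · rintro ⟨b, rfl⟩
    rw [map_mul, map_natCast, ZMod.natCast_self, zero_mul]

theorem Ideal.exists_mul_sub_one_mem_of_sub_sq_mul_mem {R : Type*} [CommRing R] {J : Ideal R}
    {a b x y : R} (hb : b - y ^ 2 * a ∈ J) (ha : a - x ^ 2 * b ∈ J) (hunit : ∃ z, a * z - 1 ∈ J) :
    (∃ z, x * z - 1 ∈ J) ∧ ∃ z, y * z - 1 ∈ J := by
  obtain ⟨z, hz⟩ := hunit
  have hxy : (x * y) ^ 2 - 1 ∈ J := by
    have key : (x * y) ^ 2 - 1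
        = (a * z - 1) * (1 - (x * y) ^ 2) - z * ((a - x ^ 2 * b) + x ^ 2 * (b - y ^ 2 * a)) := by
      ring
    rw [key]
    exact J.sub_mem (J.mul_mem_right _ hz) (J.mul_mem_left _ (J.add_mem ha (J.mul_mem_left _ hb)))
  exact ⟨⟨x * y ^ 2, by convert hxy using 1; ring⟩, ⟨y * x ^ 2, by convert hxy using 1; ring⟩⟩

section ZModPrimeSq

variable {p : ℕ}

theorem ZMod.natCast_mul_self_eq_zero {S : Type*} [Semiring S] (f : ZMod (p ^ 2) →+* S) :
    (p : S) * p = 0 := by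
  rw [← Nat.cast_mul, ← pow_two, ← map_natCast f, ZMod.natCast_self, map_zero]

theorem exists_mul_sub_one_mem_span_of_isCoprime [NeZero p] {g w : (ZMod (p ^ 2))[X]}
    (h : IsCoprime (g.map (ZMod.castHom (dvd_pow_self p two_ne_zero) (ZMod p)))
      (w.map (ZMod.castHom (dvd_pow_self p two_ne_zero) (ZMod p)))) :
    ∃ z, w * z - 1 ∈ Ideal.span {(p : (ZMod (p ^ 2))[X]), g} := by
  set φ := ZMod.castHom (dvd_pow_self p two_ne_zero) (ZMod p)
  have hker : RingHom.ker (mapRingHom φ) = Ideal.span {(p : (ZMod (p ^ 2))[X])} := by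
    rw [ker_mapRingHom, ZMod.ker_castHom, Ideal.map_span, Set.image_singleton, map_natCast]
  obtain ⟨α, β, hαβ⟩ := h
  obtain ⟨a, rfl⟩ := map_surjective φ (ZMod.castHom_surjective _) α
  obtain ⟨b, rfl⟩ := map_surjective φ (ZMod.castHom_surjective _) β
  have hmem : a * g + b * w - 1 ∈ RingHom.ker (mapRingHom φ) := by
    simp only [RingHom.mem_ker, coe_mapRingHom, Polynomial.map_sub, Polynomial.map_add,
      Polynomial.map_mul, Polynomial.map_one, hαβ, sub_self]
  obtain ⟨k, hk⟩ := Ideal.mem_span_singleton'.mp (hker ▸ hmem)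
  exact ⟨b, Ideal.mem_span_pair.mpr ⟨k, -a, by linear_combination hk⟩⟩

theorem exists_mul_sub_one_mem_span_of_degree_lt [Fact p.Prime] {g w : (ZMod (p ^ 2))[X]}
    (hg : g.Monic)
    (hgirr : Irreducible (g.map (ZMod.castHom (dvd_pow_self p two_ne_zero) (ZMod p))))
    (hw : w.map (ZMod.castHom (dvd_pow_self p two_ne_zero) (ZMod p)) ≠ 0)
    (hdeg : w.degree < g.degree) :
    ∃ z, w * z - 1 ∈ Ideal.span {(p : (ZMod (p ^ 2))[X]), g} :=
  exists_mul_sub_one_mem_span_of_isCoprime <| isCoprime_of_irreducible_of_degree_lt hgirr hw <|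
    degree_map_le.trans_lt (hdeg.trans_eq (hg.degree_map _).symm)

theorem exists_derivative_mul_sub_one_mem_span [Fact p.Prime] {g : (ZMod (p ^ 2))[X]}
    (hgirr : Irreducible (g.map (ZMod.castHom (dvd_pow_self p two_ne_zero) (ZMod p)))) :
    ∃ z, derivative g * z - 1 ∈ Ideal.span {(p : (ZMod (p ^ 2))[X]), g} :=
  exists_mul_sub_one_mem_span_of_isCoprime <| by
    rw [← derivative_map]; exact PerfectField.separable_of_irreducible hgirr

theorem exists_mul_sub_one_mem_span_sq {g w : (ZMod (p ^ 2))[X]}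
    (h : ∃ z, w * z - 1 ∈ Ideal.span {(p : (ZMod (p ^ 2))[X]), g}) :
    ∃ z, w * z - 1 ∈ Ideal.span {(p : (ZMod (p ^ 2))[X]), g ^ 2} :=
  (Ideal.exists_mul_sub_one_mem_sq h).imp fun _ hz =>
    Ideal.span_pair_sq_le g (ZMod.natCast_mul_self_eq_zero C) hz

end ZModPrimeSq

structure PaperRelations {p : ℕ} {S : Type*} [CommRing S] (ψ : (ZMod (p ^ 2))[X] →+* S) (y : S)
    (g u' u : (ZMod (p ^ 2))[X]) : Prop where
  map_eq : ψ g = ψ u' * y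
  sq_eq : y ^ 2 = p * ψ u
  natCast_mul : (p : S) * y = 0

namespace PaperRelations

variable {p : ℕ} {S : Type*} [CommRing S] {ψ : (ZMod (p ^ 2))[X] →+* S} {y : S}
  {g u' u : (ZMod (p ^ 2))[X]}

theorem natCast_mul_map_eq_zero (h : PaperRelations ψ y g u' u) {f : (ZMod (p ^ 2))[X]}
    (hf : f ∈ Ideal.span {(p : (ZMod (p ^ 2))[X]), g}) : (p : S) * ψ f = 0 := by
  obtain ⟨a, b, rfl⟩ := Ideal.mem_span_pair.mp hf
  simp only [map_add, map_mul, map_natCast]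
  linear_combination ψ a * ZMod.natCast_mul_self_eq_zero (ψ.comp C) + ψ b * p * h.map_eq
    + ψ b * ψ u' * h.natCast_mul

theorem map_mul_eq_zero (h : PaperRelations ψ y g u' u) {f : (ZMod (p ^ 2))[X]}
    (hf : f ∈ Ideal.span {(p : (ZMod (p ^ 2))[X]), g ^ 2}) : ψ f * y = 0 := by
  obtain ⟨a, b, rfl⟩ := Ideal.mem_span_pair.mp hf
  simp only [map_add, map_mul, map_pow, map_natCast]
  linear_combination ψ a * h.natCast_mul + ψ b * ((ψ g + ψ u' * y) * y * h.map_eq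
    + ψ u' ^ 2 * y * h.sq_eq + ψ u' ^ 2 * ψ u * h.natCast_mul)

theorem exists_eval₂_add_mul (h : PaperRelations ψ y g u' u) (s w : (ZMod (p ^ 2))[X]) :
    ∃ e : S, w.eval₂ (ψ.comp C) (ψ X + ψ s * y) = ψ w + ψ (derivative w * s) * y + p * e := by
  obtain ⟨k, hk⟩ := binomExpansion (w.map (ψ.comp C)) (ψ X) (ψ s * y)
  have hψ : ∀ v, ψ v = (v.map (ψ.comp C)).eval (ψ X) := fun v => by
    rw [eval_map, ← hom_eval₂, eval₂_C_X]
  refine ⟨k * ψ s ^ 2 * ψ u, ?_⟩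
  rw [← eval_map, hk, map_mul, hψ w, hψ (derivative w), derivative_map]
  linear_combination k * ψ s ^ 2 * h.sq_eq

theorem exists_paperRelations_eval₂RingHom (h : PaperRelations ψ y g u' u) {U' U v s : (ZMod (p ^ 2))[X]}
    (hs : u' + derivative g * s - U' * v ∈ Ideal.span {(p : (ZMod (p ^ 2))[X]), g ^ 2})
    (hU' : ∃ z, U' * z - 1 ∈ Ideal.span {(p : (ZMod (p ^ 2))[X]), g})
    (hU : U - v ^ 2 * u ∈ Ideal.span {(p : (ZMod (p ^ 2))[X]), g}) :
    ∃ c : S, PaperRelations (eval₂RingHom (ψ.comp C) (ψ X + ψ s * y)) (ψ v * y + p * c) g U' U := by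
  obtain ⟨z, hz⟩ := hU'
  obtain ⟨eg, heg⟩ := h.exists_eval₂_add_mul s g
  obtain ⟨eU', heU'⟩ := h.exists_eval₂_add_mul s U'
  obtain ⟨eU, heU⟩ := h.exists_eval₂_add_mul s U
  have hpp := ZMod.natCast_mul_self_eq_zero (ψ.comp C)
  have hs' := h.map_mul_eq_zero hs
  have hz' := h.natCast_mul_map_eq_zero hz
  have hU'' := h.natCast_mul_map_eq_zero hU
  simp only [map_add, map_sub, map_mul, map_pow, map_one] at hs' hz' hU''
  -- `z` inverts `U'` modulo `(p, g)`, which suffices under the factor `p`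
  set c := ψ z * (eg - ψ (derivative U') * ψ s * ψ v * ψ u)
  refine ⟨c, ⟨?_, ?_, ?_⟩⟩
  · rw [coe_eval₂RingHom, heg, heU']
    simp only [map_mul]
    linear_combination h.map_eq + hs' - (eg - ψ (derivative U') * ψ s * ψ v * ψ u) * hz'
      - ψ (derivative U') * ψ s * ψ v * h.sq_eq
      - (ψ (derivative U') * ψ s * c + eU' * ψ v) * h.natCast_mul - eU' * c * hpp
  · rw [coe_eval₂RingHom, heU]
    linear_combination ψ v ^ 2 * h.sq_eq + (2 * c * ψ v - ψ (derivative U * s)) * h.natCast_mul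
      + (c ^ 2 - eU) * hpp - hU''
  · linear_combination ψ v * h.natCast_mul + c * hpp

theorem exists_lift (h : PaperRelations ψ y g u' u) :
    ∃ f : (ZMod (p ^ 2))[X][X] ⧸ paperIdealI p g u' u →+* S,
      (∀ w, f (Ideal.Quotient.mk _ (C w)) = ψ w) ∧ f (Ideal.Quotient.mk _ X) = y := by
  have hker : paperIdealI p g u' u ≤ RingHom.ker (eval₂RingHom ψ y) := by
    rw [paperIdealI, Ideal.span_le]
    rintro _ (rfl | rfl | rfl) <;> simp [h.map_eq, h.sq_eq, h.natCast_mul]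
  exact ⟨Ideal.Quotient.lift _ (eval₂RingHom ψ y) fun _ ha => RingHom.mem_ker.mp (hker ha),
    fun w => by simp, by simp⟩

end PaperRelations

section Quotient

variable {p : ℕ} {g u' u : (ZMod (p ^ 2))[X]}

local notation "𝓡" => (ZMod (p ^ 2))[X][X] ⧸ paperIdealI p g u' u
local notation "π" => Ideal.Quotient.mk (paperIdealI p g u' u)

theorem paperRelations_mk : PaperRelations ((π).comp C) (π X) g u' u := by
  refine ⟨?_, ?_, ?_⟩
  · rw [RingHom.comp_apply, RingHom.comp_apply, ← map_mul, Ideal.Quotient.eq]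
    exact Ideal.subset_span (by simp)
  · rw [RingHom.comp_apply, ← map_pow, ← map_natCast π, ← map_mul, Ideal.Quotient.eq]
    exact Ideal.subset_span (by simp)
  · rw [← map_natCast π, ← map_mul, Ideal.Quotient.eq_zero_iff_mem]
    exact Ideal.subset_span (by simp)

theorem natCast_mul_mk_eq_natCast_mul_mk_C_coeff_zero (W : (ZMod (p ^ 2))[X][X]) :
    (p : 𝓡) * π W = p * π (C (W.coeff 0)) := by
  conv_lhs => rw [← X_mul_divX_add W]
  rw [map_add, map_mul]
  linear_combination π W.divX * (paperRelations_mk (g := g) (u' := u') (u := u)).natCast_mul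

theorem subsemiring_eq_top_of_natCast_mul_mem {s v : (ZMod (p ^ 2))[X]} {c : 𝓡}
    (hv : ∃ z, v * z - 1 ∈ Ideal.span {(p : (ZMod (p ^ 2))[X]), g ^ 2}) {T : Subsemiring 𝓡}
    (hp : ∀ r, (p : 𝓡) * r ∈ T)
    (hτ : ∀ w : (ZMod (p ^ 2))[X], w.eval₂ (((π).comp C).comp C) (π (C X) + π (C s) * π X) ∈ T)
    (hη : π (C v) * π X + p * c ∈ T) : T = ⊤ := by
  set ψ := (π).comp C
  have h : PaperRelations ψ (π X) g u' u := paperRelations_mk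
  have hpp : (p : 𝓡) * p = 0 := ZMod.natCast_mul_self_eq_zero (ψ.comp C)
  obtain ⟨z, hz⟩ := hv
  have hy : π X ∈ T := by
    obtain ⟨e, he⟩ := h.exists_eval₂_add_mul s z
    have hvz := h.map_mul_eq_zero hz
    simp only [map_sub, map_mul, map_one] at hvz
    have key : π X = z.eval₂ (ψ.comp C) (ψ X + ψ s * π X) * (ψ v * π X + p * c)
        + p * -(ψ z * c + ψ (derivative z) * ψ s * ψ v * ψ u) := by
      rw [he, map_mul]
      linear_combination -hvz - ψ (derivative z) * ψ s * ψ v * h.sq_eq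
        - (ψ (derivative z) * ψ s * c + e * ψ v) * h.natCast_mul - e * c * hpp
    rw [key]
    exact T.add_mem (T.mul_mem (hτ z) hη) (hp _)
  have hx : ψ X ∈ T := by
    obtain ⟨e, he⟩ := h.exists_eval₂_add_mul s (-s)
    have key : ψ X = X.eval₂ (ψ.comp C) (ψ X + ψ s * π X)
        + (-s).eval₂ (ψ.comp C) (ψ X + ψ s * π X) * π X + p * (ψ (derivative s) * ψ s * ψ u) := by
      rw [eval₂_X, he, derivative_neg, map_neg, map_mul, map_neg]
      linear_combination ψ (derivative s) * ψ s * h.sq_eq - e * h.natCast_mul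
    rw [key]
    exact T.add_mem (T.add_mem (hτ X) (T.mul_mem (hτ (-s)) hy)) (hp _)
  have hC : ∀ r, ψ (C r) ∈ T := fun r => by simpa using hτ (C r)
  refine eq_top_iff.mpr fun r _ => ?_
  obtain ⟨W, rfl⟩ := Ideal.Quotient.mk_surjective r
  exact ringHom_mem_of_forall π (ringHom_mem_of_forall ψ hC hx) hy W

theorem exists_surjective_quotient_paperIdealI {U' U v : (ZMod (p ^ 2))[X]}
    (hg' : ∃ a, derivative g * a - 1 ∈ Ideal.span {(p : (ZMod (p ^ 2))[X]), g ^ 2})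
    (hU' : ∃ z, U' * z - 1 ∈ Ideal.span {(p : (ZMod (p ^ 2))[X]), g})
    (hv : ∃ z, v * z - 1 ∈ Ideal.span {(p : (ZMod (p ^ 2))[X]), g ^ 2})
    (hU : U - v ^ 2 * u ∈ Ideal.span {(p : (ZMod (p ^ 2))[X]), g}) :
    ∃ f : ((ZMod (p ^ 2))[X][X] ⧸ paperIdealI p g U' U) →+* 𝓡, Function.Surjective f := by
  set ψ := (π).comp C
  have h : PaperRelations ψ (π X) g u' u := paperRelations_mk
  obtain ⟨a, ha⟩ := hg'
  have hs : u' + derivative g * (a * (U' * v - u')) - U' * v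
      ∈ Ideal.span {(p : (ZMod (p ^ 2))[X]), g ^ 2} := by
    have key : u' + derivative g * (a * (U' * v - u')) - U' * v
        = (derivative g * a - 1) * (U' * v - u') := by ring
    rw [key]
    exact Ideal.mul_mem_right _ _ ha
  obtain ⟨c, hc⟩ := h.exists_paperRelations_eval₂RingHom hs hU' hU
  obtain ⟨f, hfC, hfX⟩ := hc.exists_lift
  refine ⟨f, f.rangeS_eq_top.mp (subsemiring_eq_top_of_natCast_mul_mem hv (fun r => ?_)
    (fun w => ⟨_, hfC w⟩) ⟨_, hfX⟩)⟩
  obtain ⟨W, rfl⟩ := Ideal.Quotient.mk_surjective r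
  obtain ⟨e, he⟩ := h.exists_eval₂_add_mul (a * (U' * v - u')) (W.coeff 0)
  have hpp : (p : 𝓡) * p = 0 := ZMod.natCast_mul_self_eq_zero (ψ.comp C)
  refine ⟨p * Ideal.Quotient.mk (paperIdealI p g U' U) (C (W.coeff 0)), ?_⟩
  rw [natCast_mul_mk_eq_natCast_mul_mk_C_coeff_zero W, map_mul, map_natCast f p, hfC,
    coe_eval₂RingHom, he]
  linear_combination ψ (derivative (W.coeff 0) * (a * (U' * v - u'))) * h.natCast_mul + e * hpp

end Quotient

/-- Proposition 4.5 (2): with a common `g`, if there are `v₁(X), v₂(X) ∈ ℤ_{p²}[X]` with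
`u₂ ≡ v₂²·u₁`, `u₄ ≡ v₂·u₃`, `u₁ ≡ v₁²·u₂` and `u₃ ≡ v₁·u₄` modulo the ideal
`(p, g(X)²)`, then `R₁ = ℤ_{p²}[X,Y]/(g − u₃Y, Y² − p·u₁, pY)` and
`R₂ = ℤ_{p²}[X,Y]/(g − u₄Y, Y² − p·u₂, pY)` are isomorphic rings. -/
theorem paperRingR_iso_of_mixed_relation
    (p : ℕ) (hp : p.Prime)
    (g u₁ u₂ u₃ u₄ : Polynomial (ZMod (p ^ 2)))
    (hg : g.Monic)
    (hgirr : Irreducible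
      (g.map (ZMod.castHom (dvd_pow_self p (by norm_num : (2:ℕ) ≠ 0)) (ZMod p))))
    (hu₁ : u₁.map (ZMod.castHom (dvd_pow_self p (by norm_num : (2:ℕ) ≠ 0)) (ZMod p)) ≠ 0)
    (hu₃ : u₃.map (ZMod.castHom (dvd_pow_self p (by norm_num : (2:ℕ) ≠ 0)) (ZMod p)) ≠ 0)
    (hu₄ : u₄.map (ZMod.castHom (dvd_pow_self p (by norm_num : (2:ℕ) ≠ 0)) (ZMod p)) ≠ 0)
    (hu₁deg : u₁.degree < g.degree)
    (hu₃deg : u₃.degree < g.degree) (hu₄deg : u₄.degree < g.degree)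
    (v₁ v₂ : Polynomial (ZMod (p ^ 2)))
    (h₁ : u₂ - v₂ ^ 2 * u₁ ∈
      Ideal.span ({(p : Polynomial (ZMod (p ^ 2))), g ^ 2} : Set (Polynomial (ZMod (p ^ 2)))))
    (h₃ : u₁ - v₁ ^ 2 * u₂ ∈
      Ideal.span ({(p : Polynomial (ZMod (p ^ 2))), g ^ 2} : Set (Polynomial (ZMod (p ^ 2))))) :
    Nonempty
      ((Polynomial (Polynomial (ZMod (p ^ 2))) ⧸ paperIdealI p g u₃ u₁) ≃+*
        (Polynomial (Polynomial (ZMod (p ^ 2))) ⧸ paperIdealI p g u₄ u₂)) := by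
  have : Fact p.Prime := ⟨hp⟩
  have hg' := exists_mul_sub_one_mem_span_sq (exists_derivative_mul_sub_one_mem_span hgirr)
  obtain ⟨hv₁, hv₂⟩ := Ideal.exists_mul_sub_one_mem_of_sub_sq_mul_mem h₁ h₃
    (exists_mul_sub_one_mem_span_sq (exists_mul_sub_one_mem_span_of_degree_lt hg hgirr hu₁ hu₁deg))
  obtain ⟨Φ, hΦ⟩ := exists_surjective_quotient_paperIdealI hg'
    (exists_mul_sub_one_mem_span_of_degree_lt hg hgirr hu₄ hu₄deg) hv₂
    (Ideal.span_pair_pow_le _ _ 2 two_ne_zero h₁)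
  obtain ⟨Ψ, hΨ⟩ := exists_surjective_quotient_paperIdealI hg'
    (exists_mul_sub_one_mem_span_of_degree_lt hg hgirr hu₃ hu₃deg) hv₁
    (Ideal.span_pair_pow_le _ _ 2 two_ne_zero h₃)
  have hinj : Function.Injective (Φ.comp Ψ) :=
    RingHom.injective_of_surjective_of_isNoetherianRing
      (R := (ZMod (p ^ 2))[X][X] ⧸ paperIdealI p g u₃ u₁) (Φ.comp Ψ) (hΦ.comp hΨ)
  rw [RingHom.coe_comp] at hinj
  exact ⟨RingEquiv.ofBijective Ψ ⟨hinj.of_comp, hΨ⟩⟩
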